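/- arXiv:math/0107081 — 3 statements merged into one kernel-verified Lean document; each statement's English description precedes it below -/
import Mathlib

section
/- There exist a configuration ω ∈ {−1,1}^ℤ and a function f : {−1,1}^ℤ → ℝ such that f is quasilocal at ω in every direction (i.e. for every σ, lim_{n→∞} f(ω_{[−n,n]} σ_{[−n,n]ᶜ}) = f(ω)), yet f is not quasilocal at ω: for every n, sup over σ,η of |f(ω_{[−n,n]} σ_{[−n,n]ᶜ}) − f(ω_{[−n,n]} η_{[−n,n]ᶜ})| = 1. Explicitly, one may choose configurations χ^(m), m ∈ ℕ, with χ^(m)_{[−n,n]ᶜ} ≠ χ^(m')_{[−n,n]ᶜ} for all n whenever m ≠ m' and χ^(m)_0 ≠ ω_0 for all m, and define f(η) = m/(n+m) if η = ω_{[−n,n]} χ^(m)_{[−n,n]ᶜ} for some m,n ∈ ℕ, and f(η) = 0 otherwise. -/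
open MeasureTheory Filter Topology
open scoped ENNReal MeasureTheory Classical

noncomputable section

/-- The σ-algebra on configuration space generated by the coordinates in `Δ`. -/
def cylinderSigma (Ω₀ : Type*) [MeasurableSpace Ω₀] {ι : Type*} (Δ : Set ι) :
    MeasurableSpace (ι → Ω₀) :=
  MeasurableSpace.comap (fun ω (x : Δ) => ω (x : ι)) MeasurableSpace.pi

/-- The configuration agreeing with `ω` on `S` and with `θ` off `S`. -/
def splice {ι Ω₀ : Type*} (S : Set ι) (ω θ : ι → Ω₀) : ι → Ω₀ :=
  fun x => if x ∈ S then ω x else θ x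

/-- A function is local if it is measurable with respect to a finite cylinder σ-algebra. -/
def IsLocal {ι Ω₀ : Type*} [MeasurableSpace Ω₀] (f : (ι → Ω₀) → ℝ) : Prop :=
  ∃ Δ : Finset ι, Measurable[cylinderSigma Ω₀ (Δ : Set ι)] f

/-- Quasilocality of `f` in the direction `θ`. -/
def QuasilocalInDir {ι Ω₀ : Type*} (θ : ι → Ω₀) (f : (ι → Ω₀) → ℝ) : Prop :=
  ∀ ω, Tendsto (fun S : Finset ι => f (splice (S : Set ι) ω θ)) atTop (𝓝 (f ω))

/-- `f` is quasilocal: a uniform limit of local functions. -/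
def IsQuasilocal {ι Ω₀ : Type*} [MeasurableSpace Ω₀] (f : (ι → Ω₀) → ℝ) : Prop :=
  ∀ ε : ℝ, 0 < ε → ∃ g, IsLocal g ∧ ∀ ω, |f ω - g ω| ≤ ε

/-- A specification: a proper consistent family of probability kernels indexed by
finite subsets of the site space. -/
structure Specification (ι Ω₀ : Type*) [MeasurableSpace Ω₀] where
  k : Finset ι → (ι → Ω₀) → Measure (ι → Ω₀)
  isProb : ∀ Λ ω, IsProbabilityMeasure (k Λ ω)
  meas : ∀ (Λ : Finset ι) (A : Set (ι → Ω₀)), MeasurableSet A →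
    Measurable[cylinderSigma Ω₀ ((Λ : Set ι))ᶜ] (fun ω => k Λ ω A)
  proper : ∀ (Λ : Finset ι) (B : Set (ι → Ω₀)),
    MeasurableSet[cylinderSigma Ω₀ ((Λ : Set ι))ᶜ] B → ∀ ω, k Λ ω B = B.indicator 1 ω
  consistent : ∀ ⦃Λ Λ' : Finset ι⦄, Λ ⊆ Λ' → ∀ ω, (k Λ' ω).bind (k Λ) = k Λ' ω

/-- `γ_Λ f`, the expectation of `f` under the kernel of the specification. -/
def specInt {ι Ω₀ : Type*} [MeasurableSpace Ω₀] (γ : Specification ι Ω₀)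
    (Λ : Finset ι) (f : (ι → Ω₀) → ℝ) (ω : ι → Ω₀) : ℝ :=
  ∫ x, f x ∂(γ.k Λ ω)

/-- DLR consistency of a measure with a specification. -/
def IsGibbs {ι Ω₀ : Type*} [MeasurableSpace Ω₀] (γ : Specification ι Ω₀)
    (μ : Measure (ι → Ω₀)) : Prop :=
  ∀ Λ, μ.bind (γ.k Λ) = μ

/-- A specification is quasilocal in the direction `θ`. -/
def SpecQuasilocalInDir {ι Ω₀ : Type*} [MeasurableSpace Ω₀] (γ : Specification ι Ω₀)
    (θ : ι → Ω₀) : Prop :=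
  ∀ Λ f, IsLocal f → QuasilocalInDir θ (specInt γ Λ f)

/-- A quasilocal specification. -/
def IsSpecQuasilocal {ι Ω₀ : Type*} [MeasurableSpace Ω₀] (γ : Specification ι Ω₀) : Prop :=
  ∀ Λ f, IsLocal f → IsQuasilocal (specInt γ Λ f)

/-- A monotonicity-preserving specification. -/
def MonoPreserving {ι Ω₀ : Type*} [MeasurableSpace Ω₀] [Preorder Ω₀]
    (γ : Specification ι Ω₀) : Prop :=
  ∀ Λ (f : (ι → Ω₀) → ℝ), Measurable f → Monotone f → Monotone (specInt γ Λ f)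

/-- `γ'` is the limit of `γ` with boundary condition forced to `θ` outside larger
and larger volumes. -/
def IsDirLimitSpec {ι Ω₀ : Type*} [MeasurableSpace Ω₀] (γ γ' : Specification ι Ω₀)
    (θ : ι → Ω₀) : Prop :=
  ∀ Λ f, IsLocal f → ∀ ω,
    Tendsto (fun S : Finset ι => specInt γ Λ f (splice (S : Set ι) ω θ)) atTop
      (𝓝 (specInt γ' Λ f ω))

/-- `μ` is the weak limit `lim_{Λ↑𝕃} γ_Λ(⬝|θ)`. -/
def IsLimitWithBoundary {ι Ω₀ : Type*} [MeasurableSpace Ω₀] (γ : Specification ι Ω₀)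
    (θ : ι → Ω₀) (μ : Measure (ι → Ω₀)) : Prop :=
  IsProbabilityMeasure μ ∧
    ∀ f, IsLocal f → Tendsto (fun Λ : Finset ι => specInt γ Λ f θ) atTop (𝓝 (∫ ω, f ω ∂μ))

/-- The set of configurations at which all the `γ_Λ f` (`f` local) are continuous. -/
def contSet {ι Ω₀ : Type*} [MeasurableSpace Ω₀] [TopologicalSpace Ω₀]
    (γ : Specification ι Ω₀) : Set (ι → Ω₀) :=
  {ω | ∀ Λ f, IsLocal f → ContinuousAt (specInt γ Λ f) ω}

/-- An almost quasilocal probability measure. -/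
def AlmostQuasilocal {ι Ω₀ : Type*} [MeasurableSpace Ω₀] [TopologicalSpace Ω₀]
    (μ : Measure (ι → Ω₀)) : Prop :=
  ∃ γ : Specification ι Ω₀, IsGibbs γ μ ∧ μ (contSet γ) = 1

/-- Sites of the lattice `ℤ^d`. -/
abbrev Site (d : ℕ) := Fin d → ℤ

/-- The cube `Λ_n = ([-n,n] ∩ ℤ)^d`. -/
def cube (d : ℕ) (n : ℕ) : Finset (Site d) :=
  Fintype.piFinset fun _ => Finset.Icc (-(n : ℤ)) (n : ℤ)

/-- Translation of a configuration by `i`. -/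
def shift {Ω₀ : Type*} {d : ℕ} (i : Site d) (ω : Site d → Ω₀) : Site d → Ω₀ :=
  fun x => ω (x - i)

/-- Translation invariance of a measure. -/
def TransInv {Ω₀ : Type*} [MeasurableSpace Ω₀] {d : ℕ} (μ : Measure (Site d → Ω₀)) : Prop :=
  ∀ i : Site d, μ.map (shift i) = μ

/-- Translation invariance of a specification. -/
def TransInvSpec {Ω₀ : Type*} [MeasurableSpace Ω₀] {d : ℕ}
    (γ : Specification (Site d) Ω₀) : Prop :=
  ∀ (i : Site d) (Λ : Finset (Site d)) (ω),
    γ.k (Λ.image (· + i)) (shift i ω) = (γ.k Λ ω).map (shift i)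

/-- Restriction (projection) of a measure to the coordinates in `Δ`. -/
def restrictTo {ι Ω₀ : Type*} [MeasurableSpace Ω₀] (Δ : Finset ι)
    (μ : Measure (ι → Ω₀)) : Measure ({x // x ∈ Δ} → Ω₀) :=
  μ.map (fun ω (x : {x // x ∈ Δ}) => ω (x : ι))

/-- The Radon–Nikodym density `dμ_Δ/dν_Δ`, viewed as a function on configuration space. -/
def density {ι Ω₀ : Type*} [MeasurableSpace Ω₀] (Δ : Finset ι)
    (μ ν : Measure (ι → Ω₀)) : (ι → Ω₀) → ℝ :=
  fun ω => ((restrictTo Δ μ).rnDeriv (restrictTo Δ ν) (fun x : {x // x ∈ Δ} => ω (x : ι))).toReal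

/-- Relative entropy `H_Δ(μ|ν)` at the finite volume `Δ` (`+∞` if `μ_Δ` is not
absolutely continuous with respect to `ν_Δ`). -/
def relEnt {ι Ω₀ : Type*} [MeasurableSpace Ω₀] (Δ : Finset ι)
    (μ ν : Measure (ι → Ω₀)) : ℝ≥0∞ :=
  if restrictTo Δ μ ≪ restrictTo Δ ν then
    ENNReal.ofReal (∫ ω, density Δ μ ν ω * Real.log (density Δ μ ν ω) ∂ν)
  else ⊤

/-- Vanishing relative entropy density: `h(μ|ν) = 0`. -/
def EntDensityZero {Ω₀ : Type*} [MeasurableSpace Ω₀] {d : ℕ}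
    (μ ν : Measure (Site d → Ω₀)) : Prop :=
  Tendsto (fun n => relEnt (cube d n) μ ν / ((cube d n).card : ℝ≥0∞)) atTop (𝓝 0)


namespace DQL

abbrev PM := ({-1, 1} : Set ℤ)
def pOne : PM := ⟨1, by simp⟩
def mOne : PM := ⟨-1, by simp⟩

lemma mOne_ne_pOne : mOne ≠ pOne := fun h => by
  simpa [mOne, pOne] using congrArg Subtype.val h

def w : ℤ → PM := fun _ => pOne

def chi (m : ℕ) (x : ℤ) : PM :=
  if 0 < x ∧ ¬ ((m + 1 : ℤ) ∣ x) then pOne else mOne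

lemma chi_nonpos (m : ℕ) {x : ℤ} (hx : x ≤ 0) : chi m x = mOne := by
  simp [chi, not_lt.2 hx]

lemma chi_dvd (m : ℕ) {x : ℤ} (hx : ((m : ℤ) + 1) ∣ x) : chi m x = mOne := by
  simp [chi, hx]

lemma chi_zero (m : ℕ) : chi m 0 = mOne := chi_nonpos m le_rfl

/-- For `m < m'` the tails of `chi m` and `chi m'` differ beyond any box. -/
lemma chi_tail_ne_of_lt {m m' : ℕ} (h : m < m') (n : ℕ) :
    ∃ x : ℤ, x ∉ Set.Icc (-(n : ℤ)) (n : ℤ) ∧ chi m x ≠ chi m' x := by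
  set x : ℤ := (m + 1) * (1 + (m' + 1) * (n + 1)) with hxdef
  have hx1 : (1 : ℤ) ≤ m + 1 := by omega
  have hx2 : (n : ℤ) + 2 ≤ 1 + (m' + 1) * (n + 1) := by nlinarith [Int.ofNat_nonneg m', Int.ofNat_nonneg n]
  have hxge : (n : ℤ) + 2 ≤ x := by
    calc (n : ℤ) + 2 ≤ 1 + (m' + 1) * (n + 1) := hx2
    _ ≤ x := by rw [hxdef]; nlinarith [hx2, Int.ofNat_nonneg n]
  refine ⟨x, ?_, ?_⟩
  · simp only [Set.mem_Icc, not_and_or, not_le]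
    right; omega
  · have hdvd : ((m : ℤ) + 1) ∣ x := ⟨_, rfl⟩
    have hnd : ¬ ((m' : ℤ) + 1) ∣ x := by
      intro hd
      have heq : (m : ℤ) + 1 = x - ((m' : ℤ) + 1) * ((m + 1) * (n + 1)) := by
        rw [hxdef]; ring
      have hdd : ((m' : ℤ) + 1) ∣ ((m : ℤ) + 1) := heq ▸ dvd_sub hd ⟨_, rfl⟩
      have := Int.le_of_dvd (by omega) hdd
      omega
    have h1 : chi m x = mOne := chi_dvd m hdvd
    have h2 : chi m' x = pOne := by
      have hpos : 0 < x := by omega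
      simp [chi, hpos, hnd]
    rw [h1, h2]; exact mOne_ne_pOne

lemma chi_tail_ne {m m' : ℕ} (h : m ≠ m') (n : ℕ) :
    ∃ x : ℤ, x ∉ Set.Icc (-(n : ℤ)) (n : ℤ) ∧ chi m x ≠ chi m' x := by
  rcases lt_or_gt_of_ne h with h | h
  · exact chi_tail_ne_of_lt h n
  · obtain ⟨x, hx, hne⟩ := chi_tail_ne_of_lt h n
    exact ⟨x, hx, hne.symm⟩

/-- If the tails of `chi m` and `chi m'` agree beyond some box then `m = m'`. -/
lemma chi_eq_of_tail_eq {m m' : ℕ} (n : ℕ)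
    (h : ∀ x : ℤ, x ∉ Set.Icc (-(n : ℤ)) (n : ℤ) → chi m x = chi m' x) : m = m' := by
  by_contra hne
  obtain ⟨x, hx, hner⟩ := chi_tail_ne hne n
  exact hner (h x hx)

def box (n : ℕ) : Set ℤ := Set.Icc (-(n : ℤ)) (n : ℤ)

def spl (m n : ℕ) : ℤ → PM := splice (box n) w (chi m)

lemma spl_apply (m n : ℕ) (x : ℤ) :
    spl m n x = if x ∈ box n then pOne else chi m x := rfl

lemma spl_neg (m n : ℕ) : spl m n (-(n : ℤ) - 1) = mOne := by
  have hmem : (-(n:ℤ) - 1) ∉ box n := by simp only [box, Set.mem_Icc]; omega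
  rw [spl_apply, if_neg hmem]
  exact chi_nonpos m (by omega)

/-- Injectivity of the labelling. -/
lemma spl_inj {m n m' n' : ℕ} (h : spl m n = spl m' n') : m = m' ∧ n = n' := by
  -- first n = n'
  have hnn : n = n' := by
    by_contra hne
    rcases Nat.lt_or_ge n n' with hlt | hge
    · have h1 := spl_neg m n
      have h2 : spl m' n' (-(n:ℤ) - 1) = pOne := by
        rw [spl_apply, if_pos (by simp [box]; omega)]
      rw [congrFun h (-(n:ℤ) - 1), h2] at h1
      exact mOne_ne_pOne h1.symm
    · have hlt : n' < n := lt_of_le_of_ne hge (Ne.symm hne)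
      have h1 := spl_neg m' n'
      have h2 : spl m n (-(n':ℤ) - 1) = pOne := by
        rw [spl_apply, if_pos (by simp [box]; omega)]
      rw [← congrFun h (-(n':ℤ) - 1), h2] at h1
      exact mOne_ne_pOne h1.symm
  subst hnn
  refine ⟨chi_eq_of_tail_eq n fun x hx => ?_, rfl⟩
  have hx' : x ∉ box n := hx
  have := congrFun h x
  rwa [spl_apply, spl_apply, if_neg hx', if_neg hx'] at this

def val (m n : ℕ) : ℝ := (m : ℝ) / ((n : ℝ) + (m : ℝ))

lemma val_nonneg (m n : ℕ) : 0 ≤ val m n := by unfold val; positivity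

lemma val_le_one (m n : ℕ) : val m n ≤ 1 :=
  div_le_one_of_le₀ (by linarith [Nat.cast_nonneg (α := ℝ) n]) (by positivity)

def f : (ℤ → PM) → ℝ := fun η =>
  if h : ∃ p : ℕ × ℕ, η = spl p.1 p.2 then val h.choose.1 h.choose.2 else 0

lemma f_spl (m n : ℕ) : f (spl m n) = val m n := by
  have h : ∃ p : ℕ × ℕ, spl m n = spl p.1 p.2 := ⟨(m, n), rfl⟩
  rw [f, dif_pos h]
  obtain ⟨h1, h2⟩ := spl_inj h.choose_spec.symm
  rw [h1, h2]

lemma f_not_spl {η : ℤ → PM} (h : ¬ ∃ p : ℕ × ℕ, η = spl p.1 p.2) : f η = 0 := by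
  rw [f, dif_neg h]

lemma w_ne_spl (m n : ℕ) : w ≠ spl m n := by
  intro h
  have := congrFun h (-(n:ℤ) - 1)
  rw [spl_neg] at this
  exact mOne_ne_pOne (this.symm)

lemma f_w : f w = 0 := f_not_spl (by rintro ⟨p, hp⟩; exact w_ne_spl p.1 p.2 hp)

lemma f_nonneg (η : ℤ → PM) : 0 ≤ f η := by
  rw [f]; split
  · exact val_nonneg _ _
  · exact le_refl 0

lemma f_le_one (η : ℤ → PM) : f η ≤ 1 := by
  rw [f]; split
  · exact val_le_one _ _
  · norm_num

/-- Analysis of when a σ-splice coincides with a labelled configuration. -/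
lemma splice_analysis {σ : ℤ → PM} {n m' n' : ℕ}
    (h : splice (box n) w σ = spl m' n') :
    n ≤ n' ∧ ∀ x : ℤ, x ∉ box n' → σ x = chi m' x := by
  have hnn : n ≤ n' := by
    by_contra hlt
    push_neg at hlt
    have h1 := spl_neg m' n'
    have h2 : splice (box n) w σ (-(n':ℤ) - 1) = pOne := by
      have : (-(n':ℤ) - 1) ∈ box n := by simp [box]; omega
      simp [splice, this, w]
    rw [← h, h2] at h1
    exact mOne_ne_pOne h1.symm
  refine ⟨hnn, fun x hx => ?_⟩
  have hx2 : x ∉ box n := by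
    simp only [box, Set.mem_Icc, not_and_or, not_le] at hx ⊢
    omega
  have := congrFun h x
  rwa [show splice (box n) w σ x = σ x from if_neg hx2,
    spl_apply, if_neg hx] at this


lemma box_mono {a b : ℕ} (h : a ≤ b) : box a ⊆ box b :=
  Set.Icc_subset_Icc (by omega) (by omega)

lemma val_anti {m n n' : ℕ} (h : n ≤ n') : val m n' ≤ val m n := by
  rcases Nat.eq_zero_or_pos m with hm | hm
  · subst hm; simp [val]
  · have h0 : (1:ℝ) ≤ (m:ℝ) := by exact_mod_cast hm
    have h1 : (0:ℝ) < (n:ℝ) + m := by linarith [Nat.cast_nonneg (α := ℝ) n]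
    have h2 : (n:ℝ) + m ≤ (n':ℝ) + m := by
      have : (n:ℝ) ≤ n' := by exact_mod_cast h
      linarith
    unfold val
    gcongr

lemma f_splice_le {σ : ℤ → PM} {m N : ℕ}
    (hσ : ∀ x : ℤ, x ∉ box N → σ x = chi m x) (n : ℕ) :
    f (splice (box n) w σ) ≤ val m n := by
  by_cases h : ∃ p : ℕ × ℕ, splice (box n) w σ = spl p.1 p.2
  · obtain ⟨⟨m', n'⟩, hp⟩ := h
    obtain ⟨hnn, htail⟩ := splice_analysis hp
    have hm : m' = m := by
      apply chi_eq_of_tail_eq (max n' N)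
      intro x hx
      have hx' : x ∉ box (max n' N) := hx
      have hx1 : x ∉ box n' := fun hmem => hx' (box_mono (le_max_left _ _) hmem)
      have hx2 : x ∉ box N := fun hmem => hx' (box_mono (le_max_right _ _) hmem)
      exact (htail x hx1).symm.trans (hσ x hx2)
    rw [hp, f_spl, hm]
    exact val_anti hnn
  · rw [f_not_spl h]
    exact val_nonneg m n

lemma tendsto_dir (σ : ℤ → PM) :
    Tendsto (fun n : ℕ => f (splice (box n) w σ)) atTop (𝓝 0) := by
  by_cases hP : ∃ m N : ℕ, ∀ x : ℤ, x ∉ box N → σ x = chi m x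
  · obtain ⟨m, N, hσ⟩ := hP
    have hlim : Tendsto (fun n : ℕ => val m n) atTop (𝓝 0) :=
      Tendsto.div_atTop tendsto_const_nhds
        (tendsto_atTop_add_const_right _ _ tendsto_natCast_atTop_atTop)
    exact tendsto_of_tendsto_of_tendsto_of_le_of_le tendsto_const_nhds hlim
      (fun n => f_nonneg _) (fun n => f_splice_le hσ n)
  · have hz : ∀ n : ℕ, f (splice (box n) w σ) = 0 := fun n => f_not_spl (by
      rintro ⟨⟨m', n'⟩, hp⟩
      exact hP ⟨m', n', (splice_analysis hp).2⟩)
    rw [show (fun n : ℕ => f (splice (box n) w σ)) = fun _ => (0:ℝ) from funext hz]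
    exact tendsto_const_nhds

lemma sup_eq_one (n : ℕ) :
    (⨆ σ : ℤ → PM, ⨆ η : ℤ → PM,
      |f (splice (box n) w σ) - f (splice (box n) w η)|) = 1 := by
  set g : (ℤ → PM) → (ℤ → PM) → ℝ :=
    fun σ η => |f (splice (box n) w σ) - f (splice (box n) w η)| with hg
  have hb : ∀ σ η, g σ η ≤ 1 := by
    intro σ η
    have h1 := f_nonneg (splice (box n) w σ); have h2 := f_le_one (splice (box n) w σ)
    have h3 := f_nonneg (splice (box n) w η); have h4 := f_le_one (splice (box n) w η)
    rw [hg, abs_le]; constructor <;> [linarith; linarith]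
  have hinner_le : ∀ σ, (⨆ η, g σ η) ≤ 1 := fun σ => ciSup_le (hb σ)
  apply le_antisymm
  · exact ciSup_le hinner_le
  · have hch : ∀ m : ℕ, val m n ≤ ⨆ σ, ⨆ η, g σ η := by
      intro m
      have hv : g (chi m) w = val m n := by
        have hs : splice (box n) w w = w := by
          funext x; simp [splice]
        rw [hg]
        show |f (splice (box n) w (chi m)) - f (splice (box n) w w)| = val m n
        rw [hs, f_w]
        have hsp : splice (box n) w (chi m) = spl m n := rfl
        rw [hsp, f_spl, sub_zero, abs_of_nonneg (val_nonneg m n)]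
      calc val m n = g (chi m) w := hv.symm
        _ ≤ ⨆ η, g (chi m) η :=
            le_ciSup (f := fun η => g (chi m) η) ⟨1, by rintro y ⟨η, rfl⟩; exact hb _ _⟩ w
        _ ≤ ⨆ σ, ⨆ η, g σ η :=
            le_ciSup (f := fun σ => ⨆ η, g σ η) ⟨1, by rintro y ⟨σ, rfl⟩; exact hinner_le σ⟩ (chi m)
    have hlim : Tendsto (fun m : ℕ => val m n) atTop (𝓝 1) := by
      have h := tendsto_natCast_div_add_atTop (𝕜 := ℝ) (n : ℝ)
      unfold val
      simpa [add_comm] using h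
    exact le_of_tendsto' hlim hch

end DQL

/-- There is a configuration `ω ∈ {−1,1}^ℤ` and a function `f` which is quasilocal at
`ω` in every direction but not quasilocal at `ω`; explicitly, `f` can be chosen of the
form `f(η) = m/(n+m)` if `η = ω_{[−n,n]} χ^{(m)}_{[−n,n]ᶜ}` and `f(η) = 0` otherwise,
for suitable configurations `χ^{(m)}`. -/
theorem directional_quasilocality_does_not_imply_quasilocality :
    ∃ (ω : ℤ → ({-1, 1} : Set ℤ)) (f : (ℤ → ({-1, 1} : Set ℤ)) → ℝ)
      (χ : ℕ → ℤ → ({-1, 1} : Set ℤ)),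
      (∀ m m' : ℕ, m ≠ m' → ∀ n : ℕ,
        ∃ x : ℤ, x ∉ Set.Icc (-(n : ℤ)) (n : ℤ) ∧ χ m x ≠ χ m' x) ∧
      (∀ m : ℕ, χ m 0 ≠ ω 0) ∧
      (∀ m n : ℕ,
        f (splice (Set.Icc (-(n : ℤ)) (n : ℤ)) ω (χ m)) = (m : ℝ) / ((n : ℝ) + (m : ℝ))) ∧
      (∀ η, (¬ ∃ m n : ℕ, η = splice (Set.Icc (-(n : ℤ)) (n : ℤ)) ω (χ m)) → f η = 0) ∧
      (∀ σ : ℤ → ({-1, 1} : Set ℤ),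
        Tendsto (fun n : ℕ => f (splice (Set.Icc (-(n : ℤ)) (n : ℤ)) ω σ)) atTop
          (𝓝 (f ω))) ∧
      (∀ n : ℕ,
        (⨆ σ : ℤ → ({-1, 1} : Set ℤ), ⨆ η : ℤ → ({-1, 1} : Set ℤ),
          |f (splice (Set.Icc (-(n : ℤ)) (n : ℤ)) ω σ)
            - f (splice (Set.Icc (-(n : ℤ)) (n : ℤ)) ω η)|) = 1) := by
  refine ⟨DQL.w, DQL.f, DQL.chi, ?_, ?_, ?_, ?_, ?_, ?_⟩
  · exact fun m m' h n => DQL.chi_tail_ne h n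
  · intro m
    rw [DQL.chi_zero]
    exact DQL.mOne_ne_pOne
  · exact fun m n => DQL.f_spl m n
  · intro η h
    exact DQL.f_not_spl (by rintro ⟨p, hp⟩; exact h ⟨p.1, p.2, hp⟩)
  · intro σ
    rw [DQL.f_w]
    exact DQL.tendsto_dir σ
  · exact fun n => DQL.sup_eq_one n

end
end

section
/- Csiszár's inequality: let μ, ν be probability measures on (Ω,ℱ), and let Δ' ⊂ Δ be finite subsets of 𝕃 such that μ_Δ ≪ ν_Δ (hence also μ_{Δ'} ≪ ν_{Δ'}), with densities g_Δ = dμ_Δ/dν_Δ and g_{Δ'} = dμ_{Δ'}/dν_{Δ'}. Then H_Δ(μ|ν) − H_{Δ'}(μ|ν) ≥ (1/2) (∫_Ω |g_Δ(ω) − g_{Δ'}(ω)| dν(ω))². -/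
open MeasureTheory Filter Topology
open scoped ENNReal MeasureTheory Classical

noncomputable section

/-!
Let `p = μ_Δ` and let `ρ` be the measure with density `g_{Δ'}` with respect to `ν_Δ`; since
`g_{Δ'}` is a density of `μ_{Δ'}`, `ρ` is again a probability measure on the configurations in `Δ`.
Both `∫ g_{Δ'} log g_{Δ'} dν` and `∫ g_Δ log g_{Δ'} dν` equal `∫ log g_{Δ'} dμ`, so
`H_Δ(μ|ν) - H_{Δ'}(μ|ν)` is the Kullback–Leibler divergence of `p` from `ρ`, while
`∫ |g_Δ - g_{Δ'}| dν` is their `L¹` distance. The claim is therefore Pinsker's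
inequality on a finite set, which follows from Cauchy–Schwarz and the pointwise bound
`3 (t - 1)² ≤ (2t + 4) (t log t - t + 1)`, itself proved by studying the sign of the derivatives.
-/

open InformationTheory Set

lemma hasDerivAt_add_one_mul_log_sub {t : ℝ} (ht : t ≠ 0) :
    HasDerivAt (fun t => (t + 1) * Real.log t - 2 * (t - 1)) (Real.log t - (1 - t⁻¹)) t := by
  have h := (((hasDerivAt_id t).add_const 1).mul (Real.hasDerivAt_log ht)).sub
    (((hasDerivAt_id t).sub_const 1).const_mul 2)
  refine h.congr_deriv ?_
  simp only [id]
  field_simp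
  ring

lemma monotoneOn_add_one_mul_log_sub :
    MonotoneOn (fun t => (t + 1) * Real.log t - 2 * (t - 1)) (Ioi 0) := by
  have h_diff : ∀ t ∈ Ioi (0 : ℝ),
      DifferentiableAt ℝ (fun t => (t + 1) * Real.log t - 2 * (t - 1)) t :=
    fun t ht => (hasDerivAt_add_one_mul_log_sub (ne_of_gt ht)).differentiableAt
  refine monotoneOn_of_deriv_nonneg (convex_Ioi 0)
    (fun t ht => (h_diff t ht).continuousAt.continuousWithinAt) ?_ fun t ht => ?_
  · rw [interior_Ioi]
    exact fun t ht => (h_diff t ht).differentiableWithinAt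
  · rw [interior_Ioi] at ht
    rw [(hasDerivAt_add_one_mul_log_sub (ne_of_gt ht)).deriv, sub_nonneg]
    exact Real.one_sub_inv_le_log_of_pos ht

lemma hasDerivAt_mul_klFun_sub {t : ℝ} (ht : t ≠ 0) :
    HasDerivAt (fun t => (2 * t + 4) * klFun t - 3 * (t - 1) ^ 2)
      (4 * ((t + 1) * Real.log t - 2 * (t - 1))) t := by
  have h := ((((hasDerivAt_id t).const_mul 2).add_const 4).mul (hasDerivAt_klFun ht)).sub
    ((((hasDerivAt_id t).sub_const 1).pow 2).const_mul 3)
  refine h.congr_deriv ?_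
  simp only [klFun_apply, id]
  ring

lemma three_mul_sq_sub_one_le_mul_klFun {t : ℝ} (ht : 0 ≤ t) :
    3 * (t - 1) ^ 2 ≤ (2 * t + 4) * klFun t := by
  set f := fun t => (2 * t + 4) * klFun t - 3 * (t - 1) ^ 2
  set χ := fun t => (t + 1) * Real.log t - 2 * (t - 1)
  have hf_cont : Continuous f := by fun_prop
  have hf_diff : ∀ s, 0 < s → DifferentiableAt ℝ f s :=
    fun s hs => (hasDerivAt_mul_klFun_sub hs.ne').differentiableAt
  have hf_deriv : ∀ s, 0 < s → deriv f s = 4 * χ s :=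
    fun s hs => (hasDerivAt_mul_klFun_sub hs.ne').deriv
  have hχ_one : χ 1 = 0 := by simp [χ]
  suffices f 1 ≤ f t by simpa [f, klFun_one] using this
  rcases le_total t 1 with h1 | h1
  · refine antitoneOn_of_deriv_nonpos (convex_Icc 0 1) hf_cont.continuousOn ?_ ?_
      ⟨ht, h1⟩ ⟨zero_le_one, le_rfl⟩ h1
    · rw [interior_Icc]
      exact fun s hs => (hf_diff s hs.1).differentiableWithinAt
    · rw [interior_Icc]
      intro s hs
      have := monotoneOn_add_one_mul_log_sub hs.1 (mem_Ioi.2 one_pos) hs.2.le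
      rw [hf_deriv s hs.1]
      linarith
  · refine monotoneOn_of_deriv_nonneg (convex_Ici 1) hf_cont.continuousOn ?_ ?_
      self_mem_Ici h1 h1
    · rw [interior_Ici]
      exact fun s hs => (hf_diff s (one_pos.trans hs)).differentiableWithinAt
    · rw [interior_Ici]
      intro s hs
      have := monotoneOn_add_one_mul_log_sub (mem_Ioi.2 one_pos) (mem_Ioi.2 (one_pos.trans hs))
        hs.le
      rw [hf_deriv s (one_pos.trans hs)]
      linarith

lemma mul_log_sub_log_sub_add_eq_mul_klFun {x y : ℝ} (hxy : y = 0 → x = 0) :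
    x * (Real.log x - Real.log y) - x + y = y * klFun (x / y) := by
  rcases eq_or_ne y 0 with rfl | hy
  · simp [hxy rfl]
  rcases eq_or_ne x 0 with rfl | hx
  · simp [klFun_zero]
  rw [klFun_apply, Real.log_div hx hy]
  field_simp
  ring

lemma three_mul_sq_sub_le_mul_mul_klFun {x y : ℝ} (hx : 0 ≤ x) (hy : 0 ≤ y)
    (hxy : y = 0 → x = 0) : 3 * (x - y) ^ 2 ≤ (2 * x + 4 * y) * (y * klFun (x / y)) := by
  rcases hy.eq_or_lt with rfl | hy
  · simp [hxy rfl]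
  have key := mul_le_mul_of_nonneg_left (three_mul_sq_sub_one_le_mul_klFun (div_nonneg hx hy.le))
    (sq_nonneg y)
  calc 3 * (x - y) ^ 2 = y ^ 2 * (3 * (x / y - 1) ^ 2) := by field_simp
    _ ≤ y ^ 2 * ((2 * (x / y) + 4) * klFun (x / y)) := key
    _ = (2 * x + 4 * y) * (y * klFun (x / y)) := by field_simp

theorem pinsker_fintype {α : Type*} [Fintype α] (w x y : α → ℝ) (hw : ∀ a, 0 ≤ w a)
    (hx : ∀ a, 0 ≤ x a) (hy : ∀ a, 0 ≤ y a) (hxy : ∀ a, w a ≠ 0 → y a = 0 → x a = 0)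
    (hx_one : ∑ a, w a * x a = 1) (hy_one : ∑ a, w a * y a = 1) :
    (∑ a, w a * |x a - y a|) ^ 2 ≤ 2 * ∑ a, w a * (x a * (Real.log (x a) - Real.log (y a))) := by
  have h_cs := Finset.sum_sq_le_sum_mul_sum_of_sq_le_mul Finset.univ
    (r := fun a => w a * |x a - y a|) (f := fun a => w a * (2 * x a + 4 * y a))
    (g := fun a => w a * (y a * klFun (x a / y a)) / 3)
    (fun a _ => by have := hw a; have := hx a; have := hy a; positivity)
    (fun a _ => by
      have := klFun_nonneg (div_nonneg (hx a) (hy a)); have := hw a; have := hy a; positivity)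
    (fun a _ => by
      rcases (hw a).eq_or_lt with h0 | hpos
      · simp [← h0]
      have := three_mul_sq_sub_le_mul_mul_klFun (hx a) (hy a) (hxy a hpos.ne')
      rw [mul_pow, sq_abs]
      nlinarith [sq_nonneg (w a)])
  have h_six : ∑ a, w a * (2 * x a + 4 * y a) = 6 := by
    simp only [mul_add, Finset.sum_add_distrib, mul_left_comm (w _), ← Finset.mul_sum,
      hx_one, hy_one]
    norm_num
  have h_kl : ∑ a, w a * (y a * klFun (x a / y a))
      = ∑ a, w a * (x a * (Real.log (x a) - Real.log (y a))) := by
    calc ∑ a, w a * (y a * klFun (x a / y a))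
        = ∑ a, (w a * (x a * (Real.log (x a) - Real.log (y a))) - w a * x a + w a * y a) := by
          refine Finset.sum_congr rfl fun a _ => ?_
          rcases eq_or_ne (w a) 0 with h0 | hne
          · simp [h0]
          rw [← mul_log_sub_log_sub_add_eq_mul_klFun (hxy a hne)]
          ring
      _ = _ := by rw [Finset.sum_add_distrib, Finset.sum_sub_distrib, hx_one, hy_one]; ring
  simp only [← Finset.sum_div, h_six, h_kl] at h_cs
  linarith

lemma measureReal_singleton_eq_mul_toReal_rnDeriv {α : Type*} [MeasurableSpace α]
    [MeasurableSingletonClass α] {m n : Measure α} [SigmaFinite m] [SigmaFinite n] (hmn : m ≪ n)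
    (a : α) : m.real {a} = n.real {a} * (m.rnDeriv n a).toReal := by
  rw [← Measure.setIntegral_toReal_rnDeriv hmn, integral_singleton, smul_eq_mul]

lemma integral_comp_toReal_rnDeriv_map {α β : Type*} [MeasurableSpace α] [MeasurableSpace β]
    {m n : Measure α} [IsFiniteMeasure m] [IsFiniteMeasure n] (hmn : m ≪ n) {r : α → β}
    (hr : Measurable r) {F : ℝ → ℝ} (hF : Measurable F) :
    ∫ a, ((m.map r).rnDeriv (n.map r) (r a)).toReal
        * F (((m.map r).rnDeriv (n.map r) (r a)).toReal) ∂n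
      = ∫ a, (m.rnDeriv n a).toReal * F (((m.map r).rnDeriv (n.map r) (r a)).toReal) ∂n := by
  have hG' : Measurable fun b => ((m.map r).rnDeriv (n.map r) b).toReal :=
    (Measure.measurable_rnDeriv _ _).ennreal_toReal
  calc _ = ∫ b, ((m.map r).rnDeriv (n.map r) b).toReal
          * F (((m.map r).rnDeriv (n.map r) b).toReal) ∂(n.map r) :=
        (integral_map hr.aemeasurable (hG'.mul (hF.comp hG')).aestronglyMeasurable).symm
    _ = ∫ b, F (((m.map r).rnDeriv (n.map r) b).toReal) ∂(m.map r) :=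
        integral_toReal_rnDeriv_mul (hmn.map hr)
    _ = ∫ a, F (((m.map r).rnDeriv (n.map r) (r a)).toReal) ∂m :=
        integral_map hr.aemeasurable (hF.comp hG').aestronglyMeasurable
    _ = _ := (integral_toReal_rnDeriv_mul hmn).symm

theorem csiszar_fintype {α β : Type*} [Fintype α] [MeasurableSpace α] [MeasurableSingletonClass α]
    [MeasurableSpace β] [MeasurableSingletonClass β] {m n : Measure α} [IsProbabilityMeasure m]
    [IsProbabilityMeasure n] (hmn : m ≪ n) (r : α → β) :
    (∫ a, |(m.rnDeriv n a).toReal - ((m.map r).rnDeriv (n.map r) (r a)).toReal| ∂n) ^ 2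
      ≤ 2 * ((∫ a, (m.rnDeriv n a).toReal * Real.log (m.rnDeriv n a).toReal ∂n)
        - ∫ a, ((m.map r).rnDeriv (n.map r) (r a)).toReal
            * Real.log ((m.map r).rnDeriv (n.map r) (r a)).toReal ∂n) := by
  have hr : Measurable r := .of_discrete
  have hmn' : m.map r ≪ n.map r := hmn.map hr
  have : IsProbabilityMeasure (m.map r) := Measure.isProbabilityMeasure_map hr.aemeasurable
  set G := fun a => (m.rnDeriv n a).toReal
  set G' := fun b => ((m.map r).rnDeriv (n.map r) b).toReal
  have hG_one : ∑ a, n.real {a} * G a = 1 := by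
    simpa [integral_fintype, Integrable.of_finite, G] using Measure.integral_toReal_rnDeriv hmn
  have hG'_one : ∑ a, n.real {a} * G' (r a) = 1 := by
    have := Measure.integral_toReal_rnDeriv hmn'
    rw [integral_map hr.aemeasurable
      (Measure.measurable_rnDeriv _ _).ennreal_toReal.aestronglyMeasurable] at this
    simpa [integral_fintype, Integrable.of_finite, G'] using this
  have hac : ∀ a, n.real {a} ≠ 0 → G' (r a) = 0 → G a = 0 := by
    intro a hna hG'a
    have h_map : (m.map r).real {r a} = 0 := by
      rw [measureReal_singleton_eq_mul_toReal_rnDeriv hmn']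
      exact mul_eq_zero_of_right _ hG'a
    have h_le : m.real {a} ≤ (m.map r).real {r a} := by
      rw [map_measureReal_apply hr (measurableSet_singleton _)]
      exact measureReal_mono fun x hx => by simp_all
    have h_zero : m.real {a} = 0 := le_antisymm (h_map ▸ h_le) measureReal_nonneg
    rw [measureReal_singleton_eq_mul_toReal_rnDeriv hmn a] at h_zero
    exact (mul_eq_zero.1 h_zero).resolve_left hna
  rw [integral_comp_toReal_rnDeriv_map hmn hr Real.measurable_log]
  simp only [integral_fintype, Integrable.of_finite, smul_eq_mul, ← Finset.sum_sub_distrib,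
    ← mul_sub]
  exact pinsker_fintype _ _ _ (fun _ => measureReal_nonneg) (fun _ => ENNReal.toReal_nonneg)
    (fun _ => ENNReal.toReal_nonneg) hac hG_one hG'_one

section RestrictTo

variable {ι Ω₀ : Type*} [MeasurableSpace Ω₀]

instance isProbabilityMeasure_restrictTo (Δ : Finset ι) (μ : Measure (ι → Ω₀))
    [IsProbabilityMeasure μ] : IsProbabilityMeasure (restrictTo Δ μ) :=
  Measure.isProbabilityMeasure_map (Finset.measurable_restrict Δ).aemeasurable

lemma map_restrict₂_restrictTo {Δ' Δ : Finset ι} (hsub : Δ' ⊆ Δ) (μ : Measure (ι → Ω₀)) :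
    (restrictTo Δ μ).map (Finset.restrict₂ (π := fun _ => Ω₀) hsub) = restrictTo Δ' μ := by
  change (μ.map Δ.restrict).map _ = μ.map Δ'.restrict
  rw [Measure.map_map (Finset.measurable_restrict₂ hsub) (Finset.measurable_restrict Δ),
    Finset.restrict₂_comp_restrict]

lemma integral_density_eq_integral_restrictTo [Finite Ω₀] [MeasurableSingletonClass Ω₀]
    (μ ν : Measure (ι → Ω₀))
    {Δ' Δ : Finset ι} (hsub : Δ' ⊆ Δ) (F : ℝ → ℝ → ℝ) :
    ∫ ω, F (density Δ μ ν ω) (density Δ' μ ν ω) ∂ν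
      = ∫ a, F ((restrictTo Δ μ).rnDeriv (restrictTo Δ ν) a).toReal
          ((restrictTo Δ' μ).rnDeriv (restrictTo Δ' ν)
            (Finset.restrict₂ (π := fun _ => Ω₀) hsub a)).toReal
          ∂(restrictTo Δ ν) := by
  set g := fun a : Δ → Ω₀ => F ((restrictTo Δ μ).rnDeriv (restrictTo Δ ν) a).toReal
    ((restrictTo Δ' μ).rnDeriv (restrictTo Δ' ν)
      (Finset.restrict₂ (π := fun _ => Ω₀) hsub a)).toReal
  exact (integral_map (Finset.measurable_restrict (X := fun _ => Ω₀) Δ).aemeasurable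
    (Measurable.of_discrete (f := g)).aestronglyMeasurable).symm

end RestrictTo

/-- Csiszár's inequality: for `Δ' ⊆ Δ` finite and `μ_Δ ≪ ν_Δ`,
`H_Δ(μ|ν) − H_{Δ'}(μ|ν) ≥ ½ (∫ |g_Δ − g_{Δ'}| dν)²`. -/
theorem csiszar_inequality
    {Ω₀ : Type*} [Fintype Ω₀] [MeasurableSpace Ω₀] [DiscreteMeasurableSpace Ω₀] {d : ℕ}
    (μ ν : Measure (Site d → Ω₀))
    (hμ : IsProbabilityMeasure μ) (hν : IsProbabilityMeasure ν)
    (Δ' Δ : Finset (Site d)) (hsub : Δ' ⊆ Δ)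
    (hac : restrictTo Δ μ ≪ restrictTo Δ ν) :
    (∫ ω, density Δ μ ν ω * Real.log (density Δ μ ν ω) ∂ν)
        - (∫ ω, density Δ' μ ν ω * Real.log (density Δ' μ ν ω) ∂ν)
      ≥ (1 / 2) * (∫ ω, |density Δ μ ν ω - density Δ' μ ν ω| ∂ν) ^ 2 := by
  have key := csiszar_fintype hac (Finset.restrict₂ (π := fun _ => Ω₀) hsub)
  rw [map_restrict₂_restrictTo, map_restrict₂_restrictTo] at key
  have e₁ := integral_density_eq_integral_restrictTo μ ν hsub fun x _ => x * Real.log x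
  have e₂ := integral_density_eq_integral_restrictTo μ ν hsub fun _ y => y * Real.log y
  have e₃ := integral_density_eq_integral_restrictTo μ ν hsub fun x y => |x - y|
  beta_reduce at e₁ e₂ e₃
  rw [e₁, e₂, e₃]
  linarith
end
end

section
/- Let γ be a translation-invariant monotonicity-preserving specification, μ± = lim_{Λ↑𝕃} γ_Λ(·|±), and suppose μ⁻_{Λ_M∖Λ} ≪ μ⁺_{Λ_M∖Λ} with density g_{Λ_M∖Λ} = dμ⁻_{Λ_M∖Λ}/dμ⁺_{Λ_M∖Λ}, where Λ ⊂ Λ_M are finite. Then for every increasing local function f: 0 ≤ μ⁺[ g_{Λ_M∖Λ} (γ^{M,+}_Λ(f) − γ_Λ(f)) ] ≤ μ⁻( |γ^{M,+}_Λ(f) − γ_Λ(f)| ), where γ^{M,+}_Λ(f)(ω) = γ_Λ(f | ω_{Λ_M} +_{𝕃∖Λ_M}). -/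
open MeasureTheory Filter Topology
open scoped ENNReal MeasureTheory Classical

noncomputable section

/-!
Let `D = Λ_M \ Λ` and `ν = g_D μ⁺`. Since `γ^{M,+}_Λ f` only depends on the spins in `D`, its
`ν`-integral is its `μ⁻`-integral, so the upper bound reduces to `μ⁻(γ_Λ f) ≤ ν(γ_Λ f)` for the
increasing function `γ_Λ f`, i.e. to stochastic domination of `μ⁻` by `ν`.

Given `ω_D = b`, the measure `ν` has the conditional law of `μ⁺`. In finite volume `W`, the
conditional laws of `γ_W(·|±)` given `ω_D = b` are `γ_{W \ D}(·|b ±)`, which are ordered by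
monotonicity; letting `W ↑ 𝕃` gives `μ⁻ ≤ ν` on local upper sets. Inner regularity on the compact
configuration space extends this to all measurable upper sets, and the layer-cake formula to
bounded increasing functions.
-/

open Set

section Cylinder

variable {ι Ω₀ : Type*} [MeasurableSpace Ω₀]

lemma cylinderSigma_le_pi (S : Set ι) : cylinderSigma Ω₀ S ≤ MeasurableSpace.pi :=
  (Set.measurable_restrict S).comap_le

lemma cylinderSigma_mono {S T : Set ι} (h : S ⊆ T) :
    cylinderSigma Ω₀ S ≤ cylinderSigma Ω₀ T := by
  have : (fun (ω : ι → Ω₀) (x : S) => ω x) =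
      Set.domRestrict₂ (π := fun _ => Ω₀) h ∘ fun (ω : ι → Ω₀) (x : T) => ω x := rfl
  rw [cylinderSigma, cylinderSigma, this, ← MeasurableSpace.comap_comp]
  exact MeasurableSpace.comap_mono (Set.measurable_restrict₂ h).comap_le

lemma Measurable.dependsOn_of_cylinderSigma {β : Type*} [MeasurableSpace β]
    [MeasurableSingletonClass β] {S : Set ι} {f : (ι → Ω₀) → β}
    (hf : Measurable[cylinderSigma Ω₀ S] f) : DependsOn f S :=
  dependsOn_iff_factorsThrough.2 hf.factorsThrough

lemma measurableSet_cylinderSigma_restrict_preimage (S : Finset ι) {B : Set (S → Ω₀)}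
    (hB : MeasurableSet B) : MeasurableSet[cylinderSigma Ω₀ S] (S.restrict ⁻¹' B) :=
  ⟨B, hB, rfl⟩

lemma IsLocal.measurable {f : (ι → Ω₀) → ℝ} (hf : IsLocal f) : Measurable f := by
  obtain ⟨Δ, hΔ⟩ := hf
  exact hΔ.mono (cylinderSigma_le_pi _) le_rfl

lemma IsLocal.exists_abs_le [Finite Ω₀] {f : (ι → Ω₀) → ℝ} (hf : IsLocal f) :
    ∃ C, ∀ ω, |f ω| ≤ C := by
  obtain ⟨Δ, hΔ⟩ := hf
  obtain ⟨g, rfl⟩ := dependsOn_iff_exists_comp.1 hΔ.dependsOn_of_cylinderSigma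
  obtain ⟨C, hC⟩ := Finite.bddAbove_range fun b => |g b|
  exact ⟨C, fun ω => hC ⟨_, rfl⟩⟩

lemma Finset.restrict_surjective {π : ι → Type*} [∀ i, Nonempty (π i)] (S : Finset ι) :
    Function.Surjective (S.restrict (π := π)) :=
  fun b => ⟨fun x => if h : x ∈ S then b ⟨x, h⟩ else Classical.arbitrary _,
    funext fun x => dif_pos x.2⟩

end Cylinder

section Splice

variable {ι Ω₀ : Type*}

lemma splice_le_splice [Preorder Ω₀] (S : Set ι) (ω : ι → Ω₀) {θ θ' : ι → Ω₀} (h : θ ≤ θ') :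
    splice S ω θ ≤ splice S ω θ' := fun x => by
  unfold splice; split_ifs
  exacts [le_rfl, h x]

lemma le_splice_top [Preorder Ω₀] [OrderTop Ω₀] (S : Set ι) (ω : ι → Ω₀) :
    ω ≤ splice S ω (fun _ => ⊤) := fun x => by
  unfold splice; split_ifs
  exacts [le_rfl, le_top]

lemma measurable_splice [MeasurableSpace Ω₀] (S : Set ι) (θ : ι → Ω₀) :
    Measurable fun ω => splice S ω θ :=
  measurable_pi_iff.2 fun x => by
    by_cases hx : x ∈ S <;> simp [splice, hx, measurable_pi_apply]

end Splice

namespace Specification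

variable {ι Ω₀ : Type*} [MeasurableSpace Ω₀] (γ : Specification ι Ω₀)

instance isProbabilityMeasure_k (Λ : Finset ι) (ω : ι → Ω₀) : IsProbabilityMeasure (γ.k Λ ω) :=
  γ.isProb Λ ω

lemma measurable_k (Λ : Finset ι) : Measurable (γ.k Λ) :=
  Measure.measurable_of_measurable_coe _ fun A hA =>
    (γ.meas Λ A hA).mono (cylinderSigma_le_pi _) le_rfl

lemma dependsOn_k (Λ : Finset ι) : DependsOn (γ.k Λ) (Λ : Set ι)ᶜ := fun _ _ h =>
  Measure.ext fun A hA => (γ.meas Λ A hA).dependsOn_of_cylinderSigma h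

lemma dependsOn_specInt (Λ : Finset ι) (f : (ι → Ω₀) → ℝ) :
    DependsOn (specInt γ Λ f) (Λ : Set ι)ᶜ := fun _ _ h => by
  simp only [specInt, γ.dependsOn_k Λ h]

lemma dependsOn_specInt_splice [DecidableEq ι] (Λ S : Finset ι) (f : (ι → Ω₀) → ℝ) (θ : ι → Ω₀) :
    DependsOn (fun ω => specInt γ Λ f (splice S ω θ)) (S \ Λ : Finset ι) := by
  intro ω ω' h
  refine γ.dependsOn_specInt Λ f fun x hx => ?_
  simp only [splice]
  split_ifs with hxS
  · exact h x (by simp_all)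
  · rfl

lemma measurable_specInt (Λ : Finset ι) {f : (ι → Ω₀) → ℝ} (hf : Measurable f) :
    Measurable (specInt γ Λ f) :=
  (hf.stronglyMeasurable.integral_kernel (κ := ⟨γ.k Λ, γ.measurable_k Λ⟩)).measurable

lemma abs_specInt_le (Λ : Finset ι) {f : (ι → Ω₀) → ℝ} {C : ℝ} (hC : ∀ ω, |f ω| ≤ C)
    (ω : ι → Ω₀) : |specInt γ Λ f ω| ≤ C := by
  simpa [specInt] using norm_integral_le_of_norm_le_const (μ := γ.k Λ ω) (f := f) (ae_of_all _ hC)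

lemma k_inter_eq_indicator (Λ : Finset ι) {B : Set (ι → Ω₀)}
    (hB : MeasurableSet[cylinderSigma Ω₀ (Λ : Set ι)ᶜ] B) (V : Set (ι → Ω₀)) (ω : ι → Ω₀) :
    γ.k Λ ω (B ∩ V) = B.indicator (fun ω => γ.k Λ ω V) ω := by
  have hk := γ.proper Λ B hB ω
  by_cases hω : ω ∈ B
  · rw [indicator_of_mem hω, inter_comm, measure_inter_conull]
    rw [prob_compl_eq_zero_iff (cylinderSigma_le_pi _ _ hB), hk, indicator_of_mem hω, Pi.one_apply]
  · rw [indicator_of_notMem hω]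
    exact measure_mono_null inter_subset_left (by rw [hk, indicator_of_notMem hω])

lemma ae_eq_of_notMem [Countable ι] [MeasurableSingletonClass Ω₀] (Λ : Finset ι)
    (θ : ι → Ω₀) : ∀ᵐ ω ∂γ.k Λ θ, ∀ x ∉ Λ, ω x = θ x := by
  refine ae_all_iff.2 fun x => ?_
  by_cases hx : x ∈ Λ
  · exact ae_of_all _ fun _ h => absurd hx h
  have hcyl : MeasurableSet[cylinderSigma Ω₀ (Λ : Set ι)ᶜ] {ω : ι → Ω₀ | ω x = θ x} :=
    ⟨(fun v => v ⟨x, hx⟩) ⁻¹' {θ x}, measurable_pi_apply _ (measurableSet_singleton _), rfl⟩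
  have hmeas := cylinderSigma_le_pi _ _ hcyl
  refine (ae_iff_measure_eq hmeas.nullMeasurableSet).2 ?_ |>.mono fun _ h _ => h
  rw [γ.proper Λ _ hcyl θ, indicator_of_mem (by rfl), measure_univ, Pi.one_apply]


lemma k_atom_inter [Countable ι] [MeasurableSingletonClass Ω₀] (D W : Finset ι)
    (η θ : ι → Ω₀) {V : Set (ι → Ω₀)} (hV : MeasurableSet V) :
    γ.k W θ (D.restrict ⁻¹' {D.restrict η} ∩ V) =
      γ.k (W \ D) (splice D η θ) V * γ.k W θ (D.restrict ⁻¹' {D.restrict η}) := by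
  set A : Set (ι → Ω₀) := D.restrict ⁻¹' {D.restrict η}
  have hA : MeasurableSet[cylinderSigma Ω₀ (↑(W \ D) : Set ι)ᶜ] A :=
    cylinderSigma_mono (fun x hx => by simp [Finset.mem_coe.1 hx]) _
      (measurableSet_cylinderSigma_restrict_preimage D (measurableSet_singleton _))
  have hA' := cylinderSigma_le_pi _ _ hA
  calc γ.k W θ (A ∩ V)
      = ∫⁻ ω, γ.k (W \ D) ω (A ∩ V) ∂γ.k W θ := by
        rw [← Measure.bind_apply (hA'.inter hV) (γ.measurable_k _).aemeasurable,
          γ.consistent Finset.sdiff_subset]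
    _ = ∫⁻ ω, A.indicator (fun _ => γ.k (W \ D) (splice D η θ) V) ω ∂γ.k W θ := by
        refine lintegral_congr_ae ?_
        filter_upwards [γ.ae_eq_of_notMem W θ] with ω hω
        rw [γ.k_inter_eq_indicator _ hA]
        by_cases hωA : ω ∈ A
        · rw [indicator_of_mem hωA, indicator_of_mem hωA]
          refine congrArg (· V) (γ.dependsOn_k _ fun x hx => ?_)
          by_cases hxD : x ∈ D
          · simpa [splice, hxD] using congrFun hωA ⟨x, hxD⟩
          · simpa [splice, hxD] using hω x fun hxW => hx (by simp [hxW, hxD])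
        · rw [indicator_of_notMem hωA, indicator_of_notMem hωA]
    _ = _ := lintegral_indicator_const hA' _

end Specification

lemma IsLimitWithBoundary.tendsto_measureReal {ι Ω₀ : Type*} [MeasurableSpace Ω₀]
    {γ : Specification ι Ω₀} {θ : ι → Ω₀} {μ : Measure (ι → Ω₀)}
    (h : IsLimitWithBoundary γ θ μ) {E : Finset ι} {V : Set (ι → Ω₀)}
    (hV : MeasurableSet[cylinderSigma Ω₀ E] V) :
    Tendsto (fun Λ => (γ.k Λ θ).real V) atTop (𝓝 (μ.real V)) := by
  have hV' := cylinderSigma_le_pi _ _ hV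
  have := h.2 (V.indicator 1) ⟨E, measurable_const.indicator hV⟩
  simpa only [specInt, integral_indicator_one hV'] using this

lemma MonoPreserving.monotone_measureReal {ι Ω₀ : Type*} [MeasurableSpace Ω₀] [Preorder Ω₀]
    {γ : Specification ι Ω₀} (h : MonoPreserving γ) (Λ : Finset ι) {V : Set (ι → Ω₀)}
    (hV : MeasurableSet V) (hVup : IsUpperSet V) : Monotone fun ω => (γ.k Λ ω).real V := by
  have hmono : Monotone (V.indicator (1 : (ι → Ω₀) → ℝ)) := fun ω ω' hle => by
    by_cases hω : ω ∈ V
    · rw [indicator_of_mem hω, indicator_of_mem (hVup hle hω)]; rfl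
    · rw [indicator_of_notMem hω]; exact indicator_nonneg (fun _ _ => zero_le_one) _
  have hspec : specInt γ Λ (V.indicator 1) = fun ω => (γ.k Λ ω).real V :=
    funext fun ω => integral_indicator_one hV
  exact hspec ▸ h Λ _ (measurable_const.indicator hV) hmono

section LocalDomination

variable {ι Ω₀ : Type*} [MeasurableSpace Ω₀] [Preorder Ω₀] [BoundedOrder Ω₀]
  {γ : Specification ι Ω₀} {μp μm : Measure (ι → Ω₀)}

/-- Here `G` is the value of `g_D` on the atom `{ω_D = η_D}`. Conditioned on this atom, `γ_W(·|±)`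
is `γ_{W \ D}(·|η_D ±)`, and these kernels are ordered by monotonicity. -/
lemma measureReal_atom_inter_le [Countable ι] [MeasurableSingletonClass Ω₀]
    (hmono : MonoPreserving γ) (hμp : IsLimitWithBoundary γ (fun _ => ⊤) μp)
    (hμm : IsLimitWithBoundary γ (fun _ => ⊥) μm) (D : Finset ι) (η : ι → Ω₀) {E : Finset ι}
    {V : Set (ι → Ω₀)} (hV : MeasurableSet[cylinderSigma Ω₀ E] V) (hVup : IsUpperSet V)
    {G : ℝ} (hG : 0 ≤ G)
    (hGA : G * μp.real (D.restrict ⁻¹' {D.restrict η}) = μm.real (D.restrict ⁻¹' {D.restrict η})) :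
    μm.real (D.restrict ⁻¹' {D.restrict η} ∩ V) ≤
      G * μp.real (D.restrict ⁻¹' {D.restrict η} ∩ V) := by
  set A : Set (ι → Ω₀) := D.restrict ⁻¹' {D.restrict η}
  have hA : MeasurableSet[cylinderSigma Ω₀ D] A :=
    measurableSet_cylinderSigma_restrict_preimage D (measurableSet_singleton _)
  have hAV : MeasurableSet[cylinderSigma Ω₀ ↑(D ∪ E)] (A ∩ V) :=
    (cylinderSigma_mono (by simp) _ hA).inter (cylinderSigma_mono (by simp) _ hV)
  have hV' : MeasurableSet V := cylinderSigma_le_pi _ _ hV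
  have hfinite_volume : ∀ W, -|G * (γ.k W fun _ => ⊤).real A - (γ.k W fun _ => ⊥).real A| ≤
      G * (γ.k W fun _ => ⊤).real (A ∩ V) - (γ.k W fun _ => ⊥).real (A ∩ V) := by
    intro W
    have hfactor : ∀ θ, (γ.k W θ).real (A ∩ V) =
        (γ.k (W \ D) (splice D η θ)).real V * (γ.k W θ).real A := fun θ =>
      (congrArg ENNReal.toReal (γ.k_atom_inter D W η θ hV')).trans ENNReal.toReal_mul
    have hc : (γ.k (W \ D) (splice D η fun _ => ⊥)).real V ≤
        (γ.k (W \ D) (splice D η fun _ => ⊤)).real V :=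
      hmono.monotone_measureReal _ hV' hVup (splice_le_splice _ _ fun _ => bot_le)
    rw [hfactor, hfactor]
    set p := (γ.k W fun _ => ⊤).real A
    set c := (γ.k (W \ D) (splice D η fun _ => ⊥)).real V
    have hp₀ : 0 ≤ p := measureReal_nonneg
    have hc₀ : 0 ≤ c := measureReal_nonneg
    have hc₁ : c ≤ 1 := measureReal_le_one
    set x := G * p - (γ.k W fun _ => ⊥).real A
    have hcx : -|x| ≤ c * x := by
      nlinarith [mul_nonneg hc₀ (neg_le_iff_add_nonneg.1 (neg_abs_le x)),
        mul_nonneg (sub_nonneg.2 hc₁) (abs_nonneg x)]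
    nlinarith [mul_nonneg (mul_nonneg hG hp₀) (sub_nonneg.2 hc)]
  have hlower := (((tendsto_const_nhds (x := G)).mul (hμp.tendsto_measureReal hA)).sub
    (hμm.tendsto_measureReal hA)).abs.neg
  have hupper := ((tendsto_const_nhds (x := G)).mul (hμp.tendsto_measureReal hAV)).sub
    (hμm.tendsto_measureReal hAV)
  have := le_of_tendsto_of_tendsto hlower hupper (Eventually.of_forall hfinite_volume)
  rw [hGA, sub_self, abs_zero, neg_zero] at this
  linarith

end LocalDomination

section Reweighted

variable {ι Ω₀ : Type*} [MeasurableSpace Ω₀] {D : Finset ι} {μm μp : Measure (ι → Ω₀)}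

lemma restrictTo_eq_map (D : Finset ι) (μ : Measure (ι → Ω₀)) :
    restrictTo D μ = μ.map D.restrict :=
  rfl

lemma measurable_finset_restrict (D : Finset ι) : Measurable (D.restrict (π := fun _ : ι => Ω₀)) :=
  measurable_pi_lambda _ fun _ => measurable_pi_apply _

instance (D : Finset ι) (μ : Measure (ι → Ω₀)) [IsFiniteMeasure μ] :
    IsFiniteMeasure (restrictTo D μ) := by
  rw [restrictTo_eq_map]; infer_instance

/-- `g_D μ⁺`, the measure with `μ⁺`-density `g_D = dμ⁻_D / dμ⁺_D`: it has the `D`-marginal of `μ⁻`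
and the conditional laws of `μ⁺` given `ℱ_D`. -/
def reweighted (D : Finset ι) (μm μp : Measure (ι → Ω₀)) : Measure (ι → Ω₀) :=
  μp.withDensity fun ω => (restrictTo D μm).rnDeriv (restrictTo D μp) (D.restrict ω)

lemma restrictTo_reweighted [IsFiniteMeasure μm] [IsFiniteMeasure μp]
    (hac : restrictTo D μm ≪ restrictTo D μp) :
    restrictTo D (reweighted D μm μp) = restrictTo D μm := by
  ext B hB
  have hrestrict := measurable_finset_restrict (Ω₀ := Ω₀) D
  rw [restrictTo_eq_map, Measure.map_apply hrestrict hB, reweighted,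
    withDensity_apply _ (hrestrict hB),
    ← setLIntegral_map hB (Measure.measurable_rnDeriv _ _) hrestrict, ← restrictTo_eq_map,
    ← withDensity_apply _ hB, Measure.withDensity_rnDeriv_eq _ _ hac]

lemma reweighted_restrict_preimage [IsFiniteMeasure μm] [IsFiniteMeasure μp]
    (hac : restrictTo D μm ≪ restrictTo D μp) {B : Set (D → Ω₀)} (hB : MeasurableSet B) :
    reweighted D μm μp (D.restrict ⁻¹' B) = μm (D.restrict ⁻¹' B) := by
  have hrestrict := measurable_finset_restrict (Ω₀ := Ω₀) D
  rw [← Measure.map_apply hrestrict hB, ← Measure.map_apply hrestrict hB, ← restrictTo_eq_map,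
    ← restrictTo_eq_map, restrictTo_reweighted hac]

lemma isProbabilityMeasure_reweighted [IsProbabilityMeasure μm] [IsFiniteMeasure μp]
    (hac : restrictTo D μm ≪ restrictTo D μp) : IsProbabilityMeasure (reweighted D μm μp) :=
  ⟨by simpa using reweighted_restrict_preimage hac MeasurableSet.univ⟩

lemma reweighted_atom_inter [MeasurableSingletonClass Ω₀] (b : D → Ω₀) {V : Set (ι → Ω₀)}
    (hV : MeasurableSet V) :
    reweighted D μm μp (D.restrict (π := fun _ => Ω₀) ⁻¹' {b} ∩ V) =
      (restrictTo D μm).rnDeriv (restrictTo D μp) b * μp (D.restrict ⁻¹' {b} ∩ V) := by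
  have hA : MeasurableSet (D.restrict (π := fun _ => Ω₀) ⁻¹' {b} ∩ V) :=
    (measurable_finset_restrict D (measurableSet_singleton b)).inter hV
  rw [reweighted, withDensity_apply _ hA,
    setLIntegral_congr_fun hA fun ω hω => by rw [show D.restrict ω = b from hω.1],
    setLIntegral_const]

lemma integral_reweighted [IsFiniteMeasure μm] (φ : (ι → Ω₀) → ℝ) :
    ∫ ω, φ ω ∂reweighted D μm μp = ∫ ω, density D μm μp ω * φ ω ∂μp := by
  have hrestrict := measurable_finset_restrict (Ω₀ := Ω₀) D
  have hmeas : Measurable fun ω : ι → Ω₀ =>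
      (restrictTo D μm).rnDeriv (restrictTo D μp) (D.restrict ω) :=
    (Measure.measurable_rnDeriv _ _).comp hrestrict
  have hfin : ∀ᵐ ω ∂μp, (restrictTo D μm).rnDeriv (restrictTo D μp) (D.restrict ω) < ⊤ :=
    ae_of_ae_map hrestrict.aemeasurable (Measure.rnDeriv_lt_top _ _)
  rw [reweighted, integral_withDensity_eq_integral_toReal_smul hmeas hfin]
  rfl

lemma integral_reweighted_of_dependsOn [Countable Ω₀] [MeasurableSingletonClass Ω₀]
    [IsFiniteMeasure μm] [IsFiniteMeasure μp] (hac : restrictTo D μm ≪ restrictTo D μp)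
    {ψ : (ι → Ω₀) → ℝ} (hψ : DependsOn ψ D) :
    ∫ ω, ψ ω ∂reweighted D μm μp = ∫ ω, ψ ω ∂μm := by
  obtain ⟨g, rfl⟩ := dependsOn_iff_exists_comp.1 hψ
  have hg : ∀ μ : Measure (D → Ω₀), AEStronglyMeasurable g μ :=
    fun _ => (measurable_of_countable g).aestronglyMeasurable
  calc ∫ ω, g (D.restrict ω) ∂reweighted D μm μp
      = ∫ b, g b ∂restrictTo D (reweighted D μm μp) :=
        (integral_map (measurable_finset_restrict _).aemeasurable (hg _)).symm
    _ = ∫ b, g b ∂restrictTo D μm := by rw [restrictTo_reweighted hac]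
    _ = ∫ ω, g (D.restrict ω) ∂μm := integral_map (measurable_finset_restrict _).aemeasurable (hg _)

end Reweighted

lemma measure_eq_sum_atom_inter {ι Ω₀ : Type*} [MeasurableSpace Ω₀] [MeasurableSingletonClass Ω₀]
    [Fintype Ω₀] [DecidableEq ι] (μ : Measure (ι → Ω₀)) (D : Finset ι) (V : Set (ι → Ω₀)) :
    μ V = ∑ b : D → Ω₀, μ (D.restrict ⁻¹' {b} ∩ V) := by
  have h := sum_measure_preimage_singleton (μ := μ.restrict V) Finset.univ
    (f := D.restrict (π := fun _ => Ω₀)) fun b _ => measurable_finset_restrict D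
      (measurableSet_singleton b)
  simp only [Finset.coe_univ, preimage_univ, Measure.restrict_apply_univ] at h
  rw [← h]
  exact Finset.sum_congr rfl fun b _ =>
    Measure.restrict_apply (measurable_finset_restrict D (measurableSet_singleton b))

lemma measure_le_reweighted_of_isUpperSet_of_cylinder {ι Ω₀ : Type*} [Countable ι]
    [MeasurableSpace Ω₀] [MeasurableSingletonClass Ω₀] [Finite Ω₀] [Preorder Ω₀] [BoundedOrder Ω₀]
    {γ : Specification ι Ω₀} (hmono : MonoPreserving γ) {μp μm : Measure (ι → Ω₀)}
    (hμp : IsLimitWithBoundary γ (fun _ => ⊤) μp) (hμm : IsLimitWithBoundary γ (fun _ => ⊥) μm)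
    {D : Finset ι} (hac : restrictTo D μm ≪ restrictTo D μp) {E : Finset ι} {V : Set (ι → Ω₀)}
    (hV : MeasurableSet[cylinderSigma Ω₀ E] V) (hVup : IsUpperSet V) :
    μm V ≤ reweighted D μm μp V := by
  have := Fintype.ofFinite Ω₀
  have := hμp.1
  have := hμm.1
  have := isProbabilityMeasure_reweighted hac
  have hV' : MeasurableSet V := cylinderSigma_le_pi _ _ hV
  rw [measure_eq_sum_atom_inter μm D, measure_eq_sum_atom_inter (reweighted D μm μp) D]
  refine Finset.sum_le_sum fun b _ => ?_
  obtain ⟨η, rfl⟩ := D.restrict_surjective (π := fun _ => Ω₀) b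
  set G := (restrictTo D μm).rnDeriv (restrictTo D μp) (D.restrict η)
  have hGA : G.toReal * μp.real (D.restrict ⁻¹' {D.restrict η}) =
      μm.real (D.restrict ⁻¹' {D.restrict η}) := by
    have h := reweighted_atom_inter (μm := μm) (μp := μp) (D.restrict η) MeasurableSet.univ
    rw [inter_univ, reweighted_restrict_preimage hac (measurableSet_singleton _)] at h
    rw [Measure.real, Measure.real, ← ENNReal.toReal_mul, h]
  rw [← ENNReal.toReal_le_toReal (measure_ne_top _ _) (measure_ne_top _ _),
    reweighted_atom_inter _ hV', ENNReal.toReal_mul]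
  exact measureReal_atom_inter_le hmono hμp hμm D η hV hVup ENNReal.toReal_nonneg hGA

lemma IsClosed.upperClosure_of_compactSpace {α : Type*} [TopologicalSpace α] [Preorder α]
    [OrderClosedTopology α] [CompactSpace α] [T2Space α] {s : Set α} (hs : IsClosed s) :
    IsClosed (upperClosure s : Set α) := by
  have h : (upperClosure s : Set α) = Prod.snd '' ({p : α × α | p.1 ≤ p.2} ∩ Prod.fst ⁻¹' s) := by
    ext x; simp [mem_upperClosure, and_comm]
  rw [h]
  exact ((isClosed_le_prod.inter
    (hs.preimage continuous_fst)).isCompact.image continuous_snd).isClosed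

section StochasticDomination

variable {ι Ω₀ : Type*} [Countable ι] [MeasurableSpace Ω₀] [Preorder Ω₀]

/-- A closed upper set is the decreasing intersection of the cylinder upper sets
`S.restrict ⁻¹' (S.restrict '' C)`. -/
lemma measure_le_of_isClosed_of_isUpperSet [TopologicalSpace Ω₀] [Countable Ω₀]
    [MeasurableSingletonClass Ω₀] {μ ν : Measure (ι → Ω₀)} [IsFiniteMeasure ν]
    (hloc : ∀ (E : Finset ι) (V : Set (ι → Ω₀)), MeasurableSet[cylinderSigma Ω₀ E] V →
      IsUpperSet V → μ V ≤ ν V)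
    {C : Set (ι → Ω₀)} (hC : IsClosed C) (hCup : IsUpperSet C) : μ C ≤ ν C := by
  set V : Finset ι → Set (ι → Ω₀) := fun S => S.restrict ⁻¹' (S.restrict '' C)
  have hVloc (S : Finset ι) : MeasurableSet[cylinderSigma Ω₀ S] (V S) :=
    measurableSet_cylinderSigma_restrict_preimage S (to_countable _).measurableSet
  have hVup (S : Finset ι) : IsUpperSet (V S) := by
    rintro ω ω' hle ⟨ξ, hξ, hξω⟩
    refine ⟨splice S ω' ξ, hCup (fun x => ?_) hξ, funext fun x => by simp [splice]⟩
    by_cases hx : x ∈ S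
    · simpa [splice, hx] using (congrFun hξω ⟨x, hx⟩).trans_le (hle x)
    · simp [splice, hx]
  have hVanti : Antitone V := fun S T hST ω ⟨ξ, hξ, hξω⟩ =>
    ⟨ξ, hξ, funext fun x => congrFun hξω ⟨x, hST x.2⟩⟩
  have hInter : ⋂ S, V S = C := by
    refine (subset_iInter fun S => subset_preimage_image _ _).antisymm' fun ω hω => ?_
    choose ξ hξ hξω using mem_iInter.1 hω
    have hξ_tendsto : Tendsto ξ atTop (𝓝 ω) := tendsto_pi_nhds.2 fun x => by
      refine tendsto_const_nhds.congr' ?_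
      filter_upwards [eventually_ge_atTop {x}] with S hS
      exact (congrFun (hξω S) ⟨x, hS (Finset.mem_singleton_self x)⟩).symm
    exact hC.mem_of_tendsto hξ_tendsto (Eventually.of_forall hξ)
  have hlim := tendsto_measure_iInter_atTop (μ := ν)
    (fun S => (cylinderSigma_le_pi _ _ (hVloc S)).nullMeasurableSet) hVanti
    ⟨∅, measure_ne_top _ _⟩
  rw [hInter] at hlim
  exact ge_of_tendsto hlim (Eventually.of_forall fun S =>
    (measure_mono (hInter ▸ iInter_subset V S)).trans (hloc S _ (hVloc S) (hVup S)))

/-- Inner regularity reduces upper sets to closed ones, and the upper closure of a closed set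
is closed by compactness of the configuration space. -/
lemma measure_le_of_isUpperSet [Finite Ω₀] [DiscreteMeasurableSpace Ω₀]
    {μ ν : Measure (ι → Ω₀)} [IsFiniteMeasure μ] [IsFiniteMeasure ν]
    (hloc : ∀ (E : Finset ι) (V : Set (ι → Ω₀)), MeasurableSet[cylinderSigma Ω₀ E] V →
      IsUpperSet V → μ V ≤ ν V)
    {U : Set (ι → Ω₀)} (hU : MeasurableSet U) (hUup : IsUpperSet U) : μ U ≤ ν U := by
  let _ : TopologicalSpace Ω₀ := ⊥
  have : DiscreteTopology Ω₀ := ⟨rfl⟩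
  have : OrderClosedTopology Ω₀ := ⟨isClosed_discrete _⟩
  refine ENNReal.le_of_forall_pos_le_add fun ε hε _ => ?_
  obtain ⟨K, hKU, hK, hμK⟩ := hU.exists_isClosed_lt_add (measure_ne_top μ U)
    (ENNReal.coe_ne_zero.2 hε.ne')
  have hKclosed := hK.upperClosure_of_compactSpace
  calc μ U ≤ μ (upperClosure K) + ε :=
        hμK.le.trans (add_le_add (measure_mono subset_upperClosure) le_rfl)
    _ ≤ ν (upperClosure K) + ε := add_le_add
        (measure_le_of_isClosed_of_isUpperSet hloc hKclosed (upperClosure K).upper) le_rfl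
    _ ≤ ν U + ε := add_le_add (measure_mono (upperClosure_min hKU hUup)) le_rfl

end StochasticDomination

section LayerCake

variable {α : Type*} [MeasurableSpace α] [Preorder α] {μ ν : Measure α}

lemma lintegral_le_lintegral_of_monotone
    (h : ∀ U, MeasurableSet U → IsUpperSet U → μ U ≤ ν U) {φ : α → ℝ} (hφ : Measurable φ)
    (hφmono : Monotone φ) (hφ₀ : 0 ≤ φ) :
    ∫⁻ a, ENNReal.ofReal (φ a) ∂μ ≤ ∫⁻ a, ENNReal.ofReal (φ a) ∂ν := by
  rw [lintegral_eq_lintegral_meas_lt μ (ae_of_all _ hφ₀) hφ.aemeasurable,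
    lintegral_eq_lintegral_meas_lt ν (ae_of_all _ hφ₀) hφ.aemeasurable]
  exact lintegral_mono fun t => h _ (measurableSet_lt measurable_const hφ)
    fun a b hab ha => lt_of_lt_of_le ha (hφmono hab)

lemma integral_le_integral_of_monotone [IsProbabilityMeasure μ] [IsProbabilityMeasure ν]
    (h : ∀ U, MeasurableSet U → IsUpperSet U → μ U ≤ ν U) {φ : α → ℝ} (hφ : Measurable φ)
    (hφmono : Monotone φ) {C : ℝ} (hC : ∀ a, |φ a| ≤ C) :
    ∫ a, φ a ∂μ ≤ ∫ a, φ a ∂ν := by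
  have hφint (ρ : Measure α) [IsFiniteMeasure ρ] : Integrable φ ρ :=
    .of_bound hφ.aestronglyMeasurable C (ae_of_all _ hC)
  have hshift₀ : 0 ≤ fun a => φ a + C := fun a =>
    show 0 ≤ φ a + C by linarith [neg_abs_le (φ a), hC a]
  have hshift : ∫ a, φ a + C ∂μ ≤ ∫ a, φ a + C ∂ν := by
    rw [integral_eq_lintegral_of_nonneg_ae (ae_of_all _ hshift₀)
        (hφ.add measurable_const).aestronglyMeasurable,
      integral_eq_lintegral_of_nonneg_ae (ae_of_all _ hshift₀)
        (hφ.add measurable_const).aestronglyMeasurable]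
    exact ENNReal.toReal_mono ((hφint ν).add (integrable_const C)).lintegral_lt_top.ne
      (lintegral_le_lintegral_of_monotone h (hφ.add measurable_const)
        (fun a b hab => add_le_add (hφmono hab) le_rfl) hshift₀)
  rwa [integral_add (hφint μ) (integrable_const C), integral_add (hφint ν) (integrable_const C),
    integral_const, integral_const, probReal_univ, probReal_univ, add_le_add_iff_right] at hshift

end LayerCake

lemma integral_le_integral_reweighted {ι Ω₀ : Type*} [Countable ι] [MeasurableSpace Ω₀]
    [DiscreteMeasurableSpace Ω₀] [Finite Ω₀] [Preorder Ω₀] [BoundedOrder Ω₀]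
    {γ : Specification ι Ω₀} (hmono : MonoPreserving γ) {μp μm : Measure (ι → Ω₀)}
    (hμp : IsLimitWithBoundary γ (fun _ => ⊤) μp) (hμm : IsLimitWithBoundary γ (fun _ => ⊥) μm)
    {D : Finset ι} (hac : restrictTo D μm ≪ restrictTo D μp) {φ : (ι → Ω₀) → ℝ}
    (hφ : Measurable φ) (hφmono : Monotone φ) {C : ℝ} (hC : ∀ ω, |φ ω| ≤ C) :
    ∫ ω, φ ω ∂μm ≤ ∫ ω, φ ω ∂reweighted D μm μp := by
  have := hμp.1
  have := hμm.1
  have := isProbabilityMeasure_reweighted hac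
  refine integral_le_integral_of_monotone (fun U hU hUup => ?_) hφ hφmono hC
  exact measure_le_of_isUpperSet (fun E V hV hVup =>
    measure_le_reweighted_of_isUpperSet_of_cylinder hmono hμp hμm hac hV hVup) hU hUup

theorem plus_boundary_density_estimate_general
    {Ω₀ : Type*} [Fintype Ω₀] [MeasurableSpace Ω₀] [DiscreteMeasurableSpace Ω₀]
    [LinearOrder Ω₀] [BoundedOrder Ω₀] {d : ℕ}
    (γ : Specification (Site d) Ω₀) (hmono : MonoPreserving γ)
    (μp μm : Measure (Site d → Ω₀))
    (hμp : IsLimitWithBoundary γ (fun _ => (⊤ : Ω₀)) μp)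
    (hμm : IsLimitWithBoundary γ (fun _ => (⊥ : Ω₀)) μm)
    (Λ : Finset (Site d)) (M : ℕ)
    (hac : restrictTo (cube d M \ Λ) μm ≪ restrictTo (cube d M \ Λ) μp)
    (f : (Site d → Ω₀) → ℝ) (hf : IsLocal f) (hfmono : Monotone f) :
    0 ≤ ∫ ω, density (cube d M \ Λ) μm μp ω *
          (specInt γ Λ f (splice ((cube d M : Finset (Site d)) : Set (Site d)) ω
              (fun _ => (⊤ : Ω₀)))
            - specInt γ Λ f ω) ∂μp ∧
      (∫ ω, density (cube d M \ Λ) μm μp ω *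
          (specInt γ Λ f (splice ((cube d M : Finset (Site d)) : Set (Site d)) ω
              (fun _ => (⊤ : Ω₀)))
            - specInt γ Λ f ω) ∂μp)
        ≤ ∫ ω, |specInt γ Λ f (splice ((cube d M : Finset (Site d)) : Set (Site d)) ω
              (fun _ => (⊤ : Ω₀)))
            - specInt γ Λ f ω| ∂μm := by
  have := hμp.1
  have := hμm.1
  have := isProbabilityMeasure_reweighted hac
  set ν := reweighted (cube d M \ Λ) μm μp
  obtain ⟨C, hC⟩ := hf.exists_abs_le
  set h₁ := fun ω => specInt γ Λ f (splice (cube d M : Set (Site d)) ω fun _ => ⊤)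
  set h₂ := specInt γ Λ f
  have h₂m : Measurable h₂ := γ.measurable_specInt Λ hf.measurable
  have h₂mono : Monotone h₂ := hmono Λ f hf.measurable hfmono
  have h₂b : ∀ ω, |h₂ ω| ≤ C := γ.abs_specInt_le Λ hC
  have h₂₁ : ∀ ω, h₂ ω ≤ h₁ ω := fun ω => h₂mono (le_splice_top _ ω)
  have hint (ρ : Measure (Site d → Ω₀)) [IsFiniteMeasure ρ] : Integrable h₂ ρ ∧ Integrable h₁ ρ :=
    ⟨.of_bound h₂m.aestronglyMeasurable C (ae_of_all _ h₂b), .of_bound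
      (h₂m.comp (measurable_splice _ _)).aestronglyMeasurable C (ae_of_all _ fun _ => h₂b _)⟩
  rw [← integral_reweighted fun ω => h₁ ω - h₂ ω]
  refine ⟨integral_nonneg fun ω => sub_nonneg.2 (h₂₁ ω), ?_⟩
  calc ∫ ω, h₁ ω - h₂ ω ∂ν
      = ∫ ω, h₁ ω ∂μm - ∫ ω, h₂ ω ∂ν := by
        rw [integral_sub (hint ν).2 (hint ν).1, integral_reweighted_of_dependsOn hac
          (γ.dependsOn_specInt_splice Λ (cube d M) f _)]
    _ ≤ ∫ ω, h₁ ω ∂μm - ∫ ω, h₂ ω ∂μm := sub_le_sub_left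
        (integral_le_integral_reweighted hmono hμp hμm hac h₂m h₂mono h₂b) _
    _ = ∫ ω, |h₁ ω - h₂ ω| ∂μm := by
        rw [← integral_sub (hint μm).2 (hint μm).1]
        exact integral_congr_ae (ae_of_all _ fun ω => (abs_of_nonneg (sub_nonneg.2 (h₂₁ ω))).symm)

/-- Key estimate in the proof of Corollary r.cor1(a): for increasing local `f`,
`0 ≤ μ⁺[g_{Λ_M∖Λ}(γ^{M,+}_Λ f − γ_Λ f)] ≤ μ⁻(|γ^{M,+}_Λ f − γ_Λ f|)`. -/
theorem plus_boundary_density_estimate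
    {Ω₀ : Type*} [Fintype Ω₀] [MeasurableSpace Ω₀] [DiscreteMeasurableSpace Ω₀]
    [LinearOrder Ω₀] [BoundedOrder Ω₀] {d : ℕ}
    (γ : Specification (Site d) Ω₀) (hTI : TransInvSpec γ) (hmono : MonoPreserving γ)
    (μp μm : Measure (Site d → Ω₀))
    (hμp : IsLimitWithBoundary γ (fun _ => (⊤ : Ω₀)) μp)
    (hμm : IsLimitWithBoundary γ (fun _ => (⊥ : Ω₀)) μm)
    (Λ : Finset (Site d)) (M : ℕ) (hΛ : Λ ⊆ cube d M)
    (hac : restrictTo (cube d M \ Λ) μm ≪ restrictTo (cube d M \ Λ) μp)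
    (f : (Site d → Ω₀) → ℝ) (hf : IsLocal f) (hfmono : Monotone f) :
    0 ≤ ∫ ω, density (cube d M \ Λ) μm μp ω *
          (specInt γ Λ f (splice ((cube d M : Finset (Site d)) : Set (Site d)) ω
              (fun _ => (⊤ : Ω₀)))
            - specInt γ Λ f ω) ∂μp ∧
      (∫ ω, density (cube d M \ Λ) μm μp ω *
          (specInt γ Λ f (splice ((cube d M : Finset (Site d)) : Set (Site d)) ω
              (fun _ => (⊤ : Ω₀)))
            - specInt γ Λ f ω) ∂μp)
        ≤ ∫ ω, |specInt γ Λ f (splice ((cube d M : Finset (Site d)) : Set (Site d)) ω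
              (fun _ => (⊤ : Ω₀)))
            - specInt γ Λ f ω| ∂μm :=
  plus_boundary_density_estimate_general γ hmono μp μm hμp hμm Λ M hac f hf hfmono
end
end
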